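/- arXiv:2409.15840 — 3 statements merged into one kernel-verified Lean document; each statement's English description precedes it below -/
import Mathlib

section
/- Suppose real constants μ₁, μ₂, μ₃, μ₄ satisfy the four equations μ₁ sin(νk₁π) + μ₃ sin(ν(k₁−2)π) + 2μ₄ sin(ν(k₁−3)π) = 0, μ₁ cos(νk₁π) + μ₃ cos(ν(k₁−2)π) + 2μ₄ cos(ν(k₁−3)π) = 0, μ₂ sin(ν(k₁−1)π) + 2μ₃ sin(ν(k₁−2)π) + 3μ₄ sin(ν(k₁−3)π) = 0, and μ₂ cos(ν(k₁−1)π) + 2μ₃ cos(ν(k₁−2)π) + 3μ₄ cos(ν(k₁−3)π) = 0, where ν = 1/ℓ for an integer ℓ ≥ 4. Then μ₁ = μ₂ = μ₃ = μ₄ = 0. -/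
/-- if μ₁,…,μ₄ satisfy the four trigonometric equations with
ν = 1/ℓ, ℓ ≥ 4 an integer, then μ₁ = μ₂ = μ₃ = μ₄ = 0. -/
theorem stmt6 (ℓ : ℕ) (hℓ : 4 ≤ ℓ) (ν : ℝ) (hν : ν = 1 / (ℓ : ℝ))
    (k₁ : ℤ) (μ₁ μ₂ μ₃ μ₄ : ℝ)
    (h1 : μ₁ * Real.sin (ν * k₁ * Real.pi)
        + μ₃ * Real.sin (ν * (k₁ - 2) * Real.pi)
        + 2 * μ₄ * Real.sin (ν * (k₁ - 3) * Real.pi) = 0)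
    (h2 : μ₁ * Real.cos (ν * k₁ * Real.pi)
        + μ₃ * Real.cos (ν * (k₁ - 2) * Real.pi)
        + 2 * μ₄ * Real.cos (ν * (k₁ - 3) * Real.pi) = 0)
    (h3 : μ₂ * Real.sin (ν * (k₁ - 1) * Real.pi)
        + 2 * μ₃ * Real.sin (ν * (k₁ - 2) * Real.pi)
        + 3 * μ₄ * Real.sin (ν * (k₁ - 3) * Real.pi) = 0)
    (h4 : μ₂ * Real.cos (ν * (k₁ - 1) * Real.pi)
        + 2 * μ₃ * Real.cos (ν * (k₁ - 2) * Real.pi)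
        + 3 * μ₄ * Real.cos (ν * (k₁ - 3) * Real.pi) = 0) :
    μ₁ = 0 ∧ μ₂ = 0 ∧ μ₃ = 0 ∧ μ₄ = 0 := by
  have hπ := Real.pi_pos
  set θ : ℝ := ν * Real.pi with hθdef
  set α : ℝ := ν * (k₁ - 3) * Real.pi with hαdef
  have hℓ' : (4:ℝ) ≤ (ℓ:ℝ) := by exact_mod_cast hℓ
  have hℓ0 : (0:ℝ) < ℓ := by linarith
  have hν0 : 0 < ν := by rw [hν]; positivity
  have hν4 : ν ≤ 1/4 := by
    rw [hν, div_le_div_iff₀ hℓ0 (by norm_num)]; linarith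
  have hθ0 : 0 < θ := mul_pos hν0 hπ
  have hθ4 : θ ≤ Real.pi / 4 := by
    rw [hθdef, div_eq_mul_inv]
    calc ν * Real.pi ≤ (1/4) * Real.pi := by nlinarith
    _ = Real.pi * 4⁻¹ := by ring
  -- rewrite arguments
  have e1 : ν * (k₁:ℝ) * Real.pi = α + 3 * θ := by rw [hαdef, hθdef]; ring
  have e2 : ν * ((k₁:ℝ) - 1) * Real.pi = α + 2 * θ := by rw [hαdef, hθdef]; ring
  have e3 : ν * ((k₁:ℝ) - 2) * Real.pi = α + θ := by rw [hαdef, hθdef]; ring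
  rw [e1, e3] at h1 h2
  rw [e2, e3] at h3 h4
  simp only [Real.sin_add, Real.cos_add] at h1 h2 h3 h4
  have pyα := Real.sin_sq_add_cos_sq α
  -- projected equations
  have hA : μ₁ * Real.sin (3*θ) + μ₃ * Real.sin θ = 0 := by
    linear_combination Real.cos α * h1 - Real.sin α * h2
      - (μ₁ * Real.sin (3*θ) + μ₃ * Real.sin θ) * pyα
  have hB : μ₁ * Real.cos (3*θ) + μ₃ * Real.cos θ + 2 * μ₄ = 0 := by
    linear_combination Real.sin α * h1 + Real.cos α * h2
      - (μ₁ * Real.cos (3*θ) + μ₃ * Real.cos θ + 2*μ₄) * pyα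
  have hC : μ₂ * Real.sin (2*θ) + 2 * μ₃ * Real.sin θ = 0 := by
    linear_combination Real.cos α * h3 - Real.sin α * h4
      - (μ₂ * Real.sin (2*θ) + 2 * μ₃ * Real.sin θ) * pyα
  have hD : μ₂ * Real.cos (2*θ) + 2 * μ₃ * Real.cos θ + 3 * μ₄ = 0 := by
    linear_combination Real.sin α * h3 + Real.cos α * h4
      - (μ₂ * Real.cos (2*θ) + 2 * μ₃ * Real.cos θ + 3*μ₄) * pyα
  rw [Real.sin_three_mul] at hA
  rw [Real.cos_three_mul] at hB
  rw [Real.sin_two_mul] at hC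
  rw [Real.cos_two_mul] at hD
  clear h1 h2 h3 h4 pyα e1 e2 e3
  obtain ⟨s, hs⟩ : ∃ s, Real.sin θ = s := ⟨_, rfl⟩
  obtain ⟨c, hc⟩ : ∃ c, Real.cos θ = c := ⟨_, rfl⟩
  have pyth : s^2 + c^2 = 1 := by rw [← hs, ← hc]; exact Real.sin_sq_add_cos_sq θ
  have hs0 : 0 < s := by rw [← hs]; exact Real.sin_pos_of_pos_of_lt_pi hθ0 (by linarith)
  have hc0 : 0 < c := by
    rw [← hc]; exact Real.cos_pos_of_mem_Ioo ⟨by linarith, by linarith⟩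
  have hs3 : 0 < 3 * s - 4 * s^3 := by
    have h30 : 0 < Real.sin (3*θ) :=
      Real.sin_pos_of_pos_of_lt_pi (by linarith) (by nlinarith)
    rw [Real.sin_three_mul, hs] at h30; exact h30
  simp only [hs, hc] at hA hB hC hD
  -- key identity: 2 μ₃ s⁴ = 0
  have key : μ₃ * (2 * s^4) = 0 := by
    linear_combination (3 * s * (3*s - 4*s^3) * c) * hB
      + (-2 * s * (3*s - 4*s^3) * c) * hD
      + (-3 * (4*c^3 - 3*c) * c * s) * hA
      + ((2*c^2 - 1) * (3*s - 4*s^3)) * hC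
      + (-6 * μ₃ * s^2 + 12 * μ₃ * s^2 * c^2) * pyth
  have hμ₃ : μ₃ = 0 := by
    have h4pos : 0 < 2 * s^4 := by positivity
    rcases mul_eq_zero.mp key with h | h
    · exact h
    · exact absurd h (ne_of_gt h4pos)
  have hμ₁ : μ₁ = 0 := by
    rw [hμ₃] at hA
    have h0 : μ₁ * (3 * s - 4 * s ^ 3) = 0 := by linarith
    rcases mul_eq_zero.mp h0 with h | h
    · exact h
    · exact absurd h (ne_of_gt hs3)
  have hμ₂ : μ₂ = 0 := by
    rw [hμ₃] at hC
    have h0 : μ₂ * (2 * s * c) = 0 := by linarith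
    rcases mul_eq_zero.mp h0 with h | h
    · exact h
    · nlinarith [mul_pos hs0 hc0]
  have hμ₄ : μ₄ = 0 := by
    rw [hμ₁, hμ₃] at hB; linarith
  exact ⟨hμ₁, hμ₂, hμ₃, hμ₄⟩
end

section
/- If a symmetric positive definite 4×4 matrix ζ satisfies ĥ·I ≤ ζ⁻¹ ≤ č·I with 0 < ĥ ≤ č, and ζ' := A₂ζA₂ᵀ + B₂QB₂ᵀ with λ_max(A₂A₂ᵀ) = ā, λ_max(B₂B₂ᵀ) = b̄, and Q ≤ q̌·I, then (ζ')⁻¹ ≥ (ā/ĥ + b̄q̌)⁻¹·I. -/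
/-!
Inverting `ĥ • 1 ≤ ζ⁻¹` gives `ζ ≤ ĥ⁻¹ • 1`; conjugating by `A₂` and bounding `A₂ * A₂ᵀ` by its
top eigenvalue gives `A₂ * ζ * A₂ᵀ ≤ (ā / ĥ) • 1`, and likewise `B₂ * Q * B₂ᵀ ≤ (b̄ * q̌) • 1`.
So `ζ'` is a positive definite matrix below `(ā / ĥ + b̄ * q̌) • 1`, and inverting once more gives
the claim. Both inversions compare a matrix with a scalar, which is read off the spectrum since
`σ(M⁻¹) = σ(M)⁻¹`.
-/

open Matrix
open scoped MatrixOrder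

namespace Matrix

variable {m n : Type*} [Fintype n]

lemma PosDef.mem_spectrum_inv_iff [DecidableEq n] {M : Matrix n n ℝ} (hM : M.PosDef) {y : ℝ} :
    y ∈ spectrum ℝ M⁻¹ ↔ y⁻¹ ∈ spectrum ℝ M := by
  lift M to (Matrix n n ℝ)ˣ using hM.isUnit
  rw [← coe_units_inv, ← spectrum.map_inv, Set.mem_inv]

lemma PosDef.smul_one_le_inv [DecidableEq n] {M : Matrix n n ℝ} (hM : M.PosDef) {c : ℝ}
    (h : M ≤ c • 1) : c⁻¹ • 1 ≤ M⁻¹ := by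
  rw [← Algebra.algebraMap_eq_smul_one] at h ⊢
  rw [le_algebraMap_iff_spectrum_le hM.1.isSelfAdjoint] at h
  rw [algebraMap_le_iff_le_spectrum hM.inv.1.isSelfAdjoint]
  intro y hy
  have hy' := hM.mem_spectrum_inv_iff.1 hy
  simpa using inv_anti₀ (hM.isStrictlyPositive.spectrum_pos hy') (h _ hy')

lemma PosDef.inv_le_smul_one [DecidableEq n] {M : Matrix n n ℝ} (hM : M.PosDef) {c : ℝ}
    (hc : 0 < c) (h : c • 1 ≤ M) : M⁻¹ ≤ c⁻¹ • 1 := by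
  rw [← Algebra.algebraMap_eq_smul_one] at h ⊢
  rw [algebraMap_le_iff_le_spectrum hM.1.isSelfAdjoint] at h
  rw [le_algebraMap_iff_spectrum_le hM.inv.1.isSelfAdjoint]
  intro y hy
  simpa using inv_anti₀ hc (h _ (hM.mem_spectrum_inv_iff.1 hy))

lemma nonneg_of_smul_one_nonneg {p : Type*} [DecidableEq p] [Nonempty p] {c : ℝ}
    (h : 0 ≤ c • (1 : Matrix p p ℝ)) : 0 ≤ c := by
  simpa using (nonneg_iff_posSemidef.1 h).diag_nonneg (i := Classical.arbitrary p)

lemma mul_mul_transpose_le_mul_mul_transpose [Fintype m] {Q Q' : Matrix m m ℝ} (h : Q ≤ Q')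
    (B : Matrix n m ℝ) : B * Q * Bᵀ ≤ B * Q' * Bᵀ := by
  rw [le_iff] at h ⊢
  simpa [Matrix.mul_sub, Matrix.sub_mul] using h.mul_mul_conjTranspose_same B

lemma mul_mul_transpose_le_smul_one [Fintype m] [DecidableEq m] [DecidableEq n]
    {B : Matrix n m ℝ} {Q : Matrix m m ℝ} {q b : ℝ}
    (hq : 0 ≤ q) (hQ : Q ≤ q • 1) (hb : ∀ x ∈ spectrum ℝ (B * Bᵀ), x ≤ b) :
    B * Q * Bᵀ ≤ (b * q) • 1 :=
  calc B * Q * Bᵀ ≤ B * (q • 1) * Bᵀ := mul_mul_transpose_le_mul_mul_transpose hQ B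
    _ = q • (B * Bᵀ) := by simp
    _ ≤ q • (b • 1) := by
      gcongr
      rw [← Algebra.algebraMap_eq_smul_one]
      exact le_algebraMap_of_spectrum_le hb (isHermitian_mul_conjTranspose_self B).isSelfAdjoint
    _ = (b * q) • 1 := by rw [smul_smul, mul_comm]

end Matrix

theorem stmt8_general (A₂ : Matrix (Fin 4) (Fin 4) ℝ) (hA₂ : IsUnit A₂)
    (B₂ : Matrix (Fin 4) (Fin 2) ℝ)
    (Q : Matrix (Fin 2) (Fin 2) ℝ) (hQ : Q.PosDef)
    (qc : ℝ) (hQle : ((qc • (1 : Matrix (Fin 2) (Fin 2) ℝ)) - Q).PosSemidef)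
    (abar bbar : ℝ)
    (habar : IsGreatest (spectrum ℝ (A₂ * A₂ᵀ)) abar)
    (hbbar : IsGreatest (spectrum ℝ (B₂ * B₂ᵀ)) bbar)
    (ζ : Matrix (Fin 4) (Fin 4) ℝ) (hζ : ζ.PosDef)
    (hhat : ℝ) (hpos : 0 < hhat)
    (hlo : (ζ⁻¹ - hhat • (1 : Matrix (Fin 4) (Fin 4) ℝ)).PosSemidef) :
    ((A₂ * ζ * A₂ᵀ + B₂ * Q * B₂ᵀ)⁻¹
      - (abar / hhat + bbar * qc)⁻¹ • (1 : Matrix (Fin 4) (Fin 4) ℝ)).PosSemidef := by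
  rw [← le_iff] at hQle hlo ⊢
  have hζle : ζ ≤ hhat⁻¹ • 1 := by
    simpa [nonsing_inv_nonsing_inv ζ hζ.det_pos.ne'.isUnit] using hζ.inv.inv_le_smul_one hpos hlo
  have hqc : 0 ≤ qc := nonneg_of_smul_one_nonneg (hQ.posSemidef.nonneg.trans hQle)
  have hAζA := mul_mul_transpose_le_smul_one (inv_nonneg.2 hpos.le) hζle habar.2
  have hBQB := mul_mul_transpose_le_smul_one hqc hQle hbbar.2
  have hS : (A₂ * ζ * A₂ᵀ + B₂ * Q * B₂ᵀ).PosDef := by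
    have hAζA_pos := (IsUnit.posDef_star_right_conjugate_iff hA₂).2 hζ
    rw [star_eq_conjTranspose, conjTranspose_eq_transpose_of_trivial] at hAζA_pos
    exact hAζA_pos.add_posSemidef (hQ.posSemidef.mul_mul_conjTranspose_same B₂)
  have hS_le : A₂ * ζ * A₂ᵀ + B₂ * Q * B₂ᵀ ≤ (abar / hhat + bbar * qc) • 1 := by
    rw [div_eq_mul_inv, add_smul]
    exact add_le_add hAζA hBQB
  exact hS.smul_one_le_inv hS_le

/-- if ĥ·I ≤ ζ⁻¹ ≤ č·I with 0 < ĥ ≤ č, and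
ζ' = A₂ζA₂ᵀ + B₂QB₂ᵀ with λ_max(A₂A₂ᵀ) = ā, λ_max(B₂B₂ᵀ) = b̄ and Q ≤ q̌·I,
then (ζ')⁻¹ ≥ (ā/ĥ + b̄q̌)⁻¹·I (Loewner order). -/
theorem stmt8 (A₂ : Matrix (Fin 4) (Fin 4) ℝ) (hA₂ : IsUnit A₂)
    (B₂ : Matrix (Fin 4) (Fin 2) ℝ)
    (Q : Matrix (Fin 2) (Fin 2) ℝ) (hQ : Q.PosDef) (hQsym : Q.IsHermitian)
    (qc : ℝ) (hQle : ((qc • (1 : Matrix (Fin 2) (Fin 2) ℝ)) - Q).PosSemidef)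
    (abar bbar : ℝ)
    (habar : IsGreatest (spectrum ℝ (A₂ * A₂ᵀ)) abar)
    (hbbar : IsGreatest (spectrum ℝ (B₂ * B₂ᵀ)) bbar)
    (ζ : Matrix (Fin 4) (Fin 4) ℝ) (hζ : ζ.PosDef)
    (hhat chk : ℝ) (hpos : 0 < hhat) (hhc : hhat ≤ chk)
    (hlo : (ζ⁻¹ - hhat • (1 : Matrix (Fin 4) (Fin 4) ℝ)).PosSemidef)
    (hhi : ((chk • (1 : Matrix (Fin 4) (Fin 4) ℝ)) - ζ⁻¹).PosSemidef) :
    ((A₂ * ζ * A₂ᵀ + B₂ * Q * B₂ᵀ)⁻¹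
      - (abar / hhat + bbar * qc)⁻¹ • (1 : Matrix (Fin 4) (Fin 4) ℝ)).PosSemidef :=
  stmt8_general A₂ hA₂ B₂ Q hQ qc hQle abar bbar habar hbbar ζ hζ hhat hpos hlo
end

section
/- The controllability matrix H₂ = [[t²/2, 3t²/2, …, (2m+1)t²/2],[t, t, …, t]] ⊗ I₂ with m ≥ 1 columns of blocks has rank 4; consequently, for any symmetric positive definite Q̂ with q̂·I ≤ Q̂ ≤ q̌·I, the Gramian H₂Q̂H₂ᵀ satisfies Λ₃·I₄ ≤ H₂Q̂H₂ᵀ ≤ Λ₄·I₄ for some positive constants Λ₃, Λ₄. -/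
/-!
Write `H = B ⊗ I₂`. The first two columns of `B` form `[[t²/2, 3t²/2], [t, t]]`, whose determinant
is `-t³ ≠ 0`, so `x ↦ x B` is injective, hence so is `x ↦ x H`: the rows of `H` are linearly
independent and `H Q̂ Hᵀ` is positive definite. The spectrum of a positive definite matrix is a
finite set of positive reals, so it lies between positive multiples of the identity in the
Loewner order.
-/

open Matrix Kronecker
open scoped MatrixOrder ComplexOrder

namespace Matrix

section Kronecker

variable {R l m n : Type*} [Semiring R] [Fintype l] [Fintype n] [DecidableEq n]

theorem vecMul_kronecker_one_apply (A : Matrix l m R) (x : l × n → R) (k : m) (j : n) :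
    (x ᵥ* (A ⊗ₖ (1 : Matrix n n R))) (k, j) = ((fun i => x (i, j)) ᵥ* A) k := by
  simp [vecMul, dotProduct, Fintype.sum_prod_type, one_apply]

theorem vecMul_kronecker_one_injective {A : Matrix l m R} (hA : Function.Injective A.vecMul) :
    Function.Injective (A ⊗ₖ (1 : Matrix n n R)).vecMul := by
  intro x y hxy
  funext ⟨i, j⟩
  have hj : (fun i => x (i, j)) ᵥ* A = (fun i => y (i, j)) ᵥ* A := funext fun k => by
    simpa only [vecMul_kronecker_one_apply] using congrFun hxy (k, j)
  exact congrFun (hA hj) i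

end Kronecker

section Loewner

variable {𝕜 n : Type*} [RCLike 𝕜] [Fintype n] [DecidableEq n]

theorem IsHermitian.exists_le_smul_one {P : Matrix n n 𝕜} (hP : P.IsHermitian) :
    ∃ C : ℝ, 0 < C ∧ P ≤ C • (1 : Matrix n n 𝕜) := by
  obtain ⟨r, hr⟩ := (hP.spectrum_real_eq_range_eigenvalues ▸ Set.finite_range _).bddAbove
  refine ⟨max r 1, by positivity, ?_⟩
  rw [← Algebra.algebraMap_eq_smul_one]
  exact le_algebraMap_of_spectrum_le (fun x hx => (hr hx).trans (le_max_left _ _)) hP.isSelfAdjoint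

theorem PosDef.exists_pos_smul_one_le {P : Matrix n n 𝕜} (hP : P.PosDef) :
    ∃ c : ℝ, 0 < c ∧ c • (1 : Matrix n n 𝕜) ≤ P := by
  cases isEmpty_or_nonempty n
  · exact ⟨1, one_pos, le_of_eq (Subsingleton.elim _ _)⟩
  simp_rw [← Algebra.algebraMap_eq_smul_one]
  exact (CFC.exists_pos_algebraMap_le_iff hP.isHermitian.isSelfAdjoint).mpr
    fun x hx => hP.isStrictlyPositive.spectrum_pos hx

end Loewner

end Matrix

noncomputable def controllabilityBlock (t : ℝ) (m : ℕ) : Matrix (Fin 2) (Fin (m + 1)) ℝ :=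
  of fun i k => if i = 0 then (2 * (k : ℕ) + 1) * t ^ 2 / 2 else t

theorem controllabilityBlock_vecMul_injective {t : ℝ} (ht : t ≠ 0) {m : ℕ} (hm : 1 ≤ m) :
    Function.Injective (controllabilityBlock t m).vecMul := by
  intro x y hxy
  have hcol (k : Fin (m + 1)) := congrFun hxy k
  simp only [controllabilityBlock, vecMul, dotProduct, Fin.sum_univ_two, of_apply] at hcol
  have h0 : x 0 * (t ^ 2 / 2) + x 1 * t = y 0 * (t ^ 2 / 2) + y 1 * t := by
    simpa using hcol 0
  have h1 : x 0 * (3 * t ^ 2 / 2) + x 1 * t = y 0 * (3 * t ^ 2 / 2) + y 1 * t := by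
    have := hcol ⟨1, by omega⟩
    norm_num at this
    linarith
  have hx0 : x 0 = y 0 := by
    have : (x 0 - y 0) * t ^ 2 = 0 := by linarith
    simpa [ht, sub_eq_zero] using this
  have hx1 : x 1 = y 1 := by
    have : (x 1 - y 1) * t = 0 := by rw [hx0] at h0; linarith
    simpa [ht, sub_eq_zero] using this
  ext i; fin_cases i <;> assumption

theorem stmt17_general (t : ℝ) (ht : 0 < t) (m : ℕ) (hm : 1 ≤ m)
    (H : Matrix (Fin 2 × Fin 2) (Fin (m + 1) × Fin 2) ℝ)
    (hH : H = (Matrix.of fun (i : Fin 2) (k : Fin (m + 1)) =>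
        if i = 0 then (2 * (k : ℕ) + 1) * t ^ 2 / 2 else t)
      ⊗ₖ (1 : Matrix (Fin 2) (Fin 2) ℝ))
    (Qhat : Matrix (Fin (m + 1) × Fin 2) (Fin (m + 1) × Fin 2) ℝ)
    (hQhat : Qhat.PosDef) :
    H.rank = 4 ∧
    ∃ Λ₃ Λ₄ : ℝ, 0 < Λ₃ ∧ 0 < Λ₄ ∧
      (H * Qhat * Hᵀ - Λ₃ • (1 : Matrix (Fin 2 × Fin 2) (Fin 2 × Fin 2) ℝ)).PosSemidef ∧
      (Λ₄ • (1 : Matrix (Fin 2 × Fin 2) (Fin 2 × Fin 2) ℝ) - H * Qhat * Hᵀ).PosSemidef := by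
  have hinj : Function.Injective H.vecMul := by
    rw [hH]
    exact vecMul_kronecker_one_injective (controllabilityBlock_vecMul_injective ht.ne' hm)
  have hG : (H * Qhat * Hᵀ).PosDef := by
    simpa only [conjTranspose_eq_transpose_of_trivial] using hQhat.mul_mul_conjTranspose_same hinj
  obtain ⟨c, hc, hcG⟩ := hG.exists_pos_smul_one_le
  obtain ⟨C, hC, hGC⟩ := hG.isHermitian.exists_le_smul_one
  exact ⟨(vecMul_injective_iff.mp hinj).rank_matrix, c, C, hc, hC, hcG, hGC⟩

/-- the controllability matrix
H₂ = [[t²/2, 3t²/2, …, (2m+1)t²/2],[t, …, t]] ⊗ I₂ has rank 4, and for any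
symmetric positive definite Q̂ with q̂·I ≤ Q̂ ≤ q̌·I the Gramian H₂Q̂H₂ᵀ
satisfies Λ₃·I ≤ H₂Q̂H₂ᵀ ≤ Λ₄·I for some Λ₃, Λ₄ > 0. -/
theorem stmt17 (t : ℝ) (ht : 0 < t) (m : ℕ) (hm : 1 ≤ m)
    (H : Matrix (Fin 2 × Fin 2) (Fin (m + 1) × Fin 2) ℝ)
    (hH : H = (Matrix.of fun (i : Fin 2) (k : Fin (m + 1)) =>
        if i = 0 then (2 * (k : ℕ) + 1) * t ^ 2 / 2 else t)
      ⊗ₖ (1 : Matrix (Fin 2) (Fin 2) ℝ))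
    (Qhat : Matrix (Fin (m + 1) × Fin 2) (Fin (m + 1) × Fin 2) ℝ)
    (hQhat : Qhat.PosDef) (qlo qhi : ℝ) (hqlo : 0 < qlo)
    (hQlo : (Qhat - qlo • (1 : Matrix (Fin (m + 1) × Fin 2) (Fin (m + 1) × Fin 2) ℝ)).PosSemidef)
    (hQhi : (qhi • (1 : Matrix (Fin (m + 1) × Fin 2) (Fin (m + 1) × Fin 2) ℝ) - Qhat).PosSemidef) :
    H.rank = 4 ∧
    ∃ Λ₃ Λ₄ : ℝ, 0 < Λ₃ ∧ 0 < Λ₄ ∧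
      (H * Qhat * Hᵀ - Λ₃ • (1 : Matrix (Fin 2 × Fin 2) (Fin 2 × Fin 2) ℝ)).PosSemidef ∧
      (Λ₄ • (1 : Matrix (Fin 2 × Fin 2) (Fin 2 × Fin 2) ℝ) - H * Qhat * Hᵀ).PosSemidef :=
  stmt17_general t ht m hm H hH Qhat hQhat
end
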